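/- arXiv:1807.09962 — 2 statements merged into one kernel-verified Lean document; each statement's English description precedes it below -/
import Mathlib

section
/- Conditional variance lower bound: let Σ be a real symmetric positive semi-definite m×m matrix and σ > 0 such that Σ − σ²·I is positive semi-definite. Then for any index i and any subset S of indices not containing i with Σ_{S,S} invertible, the conditional variance Σ_{ii} − Σ_{i,S}·(Σ_{S,S})⁻¹·Σ_{S,i} is at least σ². -/
/-!
Put `w = Σ_{S,S}⁻¹ Σ_{S,i}` and let `x = eᵢ - w`, with `w` extended by zero off `S`; the
extension along `e : ι → n` is written `(1 : Matrix n n R).submatrix id e *ᵥ w`. Expanding the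
quadratic form, `xᵀ Σ x = Σᵢᵢ - Σ_{i,S} w - wᵀ Σ_{S,i} + wᵀ Σ_{S,S} w`, and the last two terms
cancel because `Σ_{S,S} w = Σ_{S,i}`; so `xᵀ Σ x` is the conditional variance. As `i ∉ S`,
`xᵢ = 1` and hence `xᵀ x ≥ 1`, while `Σ - σ² I ⪰ 0` gives `xᵀ Σ x ≥ σ² xᵀ x ≥ σ²`.
-/

open Matrix

namespace Matrix

variable {R n ι : Type*}

section CommRing

variable [CommRing R] [DecidableEq n] [Fintype ι]

theorem one_submatrix_mulVec_apply_of_notMem_range (e : ι → n) (w : ι → R) {i : n}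
    (hi : i ∉ Set.range e) : ((1 : Matrix n n R).submatrix id e *ᵥ w) i = 0 :=
  Finset.sum_eq_zero fun j _ => mul_eq_zero_of_left (one_apply_ne fun h => hi ⟨j, h.symm⟩) _

variable [Fintype n]

theorem one_submatrix_mulVec_dotProduct (e : ι → n) (w : ι → R) (u : n → R) :
    ((1 : Matrix n n R).submatrix id e *ᵥ w) ⬝ᵥ u = w ⬝ᵥ (u ∘ e) := by
  rw [dotProduct_comm, dotProduct_mulVec, dotProduct_comm]
  congr 1
  ext j
  simp [vecMul, dotProduct, one_apply]

theorem mulVec_one_submatrix_mulVec (M : Matrix n n R) (e : ι → n) (w : ι → R) :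
    M *ᵥ ((1 : Matrix n n R).submatrix id e *ᵥ w) = M.submatrix id e *ᵥ w := by
  rw [mulVec_mulVec, ← Equiv.coe_refl, mul_submatrix_one]
  rfl

theorem dotProduct_mulVec_single_sub_one_submatrix_mulVec (M : Matrix n n R) (e : ι → n)
    (i : n) (w : ι → R) :
    let x := Pi.single i 1 - (1 : Matrix n n R).submatrix id e *ᵥ w
    x ⬝ᵥ (M *ᵥ x) = M i i - (fun j => M i (e j)) ⬝ᵥ w - w ⬝ᵥ (fun j => M (e j) i)
      + w ⬝ᵥ (M.submatrix e e *ᵥ w) := by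
  intro x
  have hMx : M *ᵥ x = (fun k => M k i) - M.submatrix id e *ᵥ w := by
    rw [mulVec_sub, mulVec_single_one, mulVec_one_submatrix_mulVec]
    rfl
  rw [hMx, sub_dotProduct, dotProduct_sub, dotProduct_sub, single_dotProduct,
    single_dotProduct, one_submatrix_mulVec_dotProduct, one_submatrix_mulVec_dotProduct]
  change 1 * M i i - 1 * (fun j => M i (e j)) ⬝ᵥ w
    - (w ⬝ᵥ (fun j => M (e j) i) - w ⬝ᵥ (M.submatrix e e *ᵥ w)) = _
  ring

theorem dotProduct_mulVec_single_sub_one_submatrix_mulVec_inv [DecidableEq ι]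
    (M : Matrix n n R) (e : ι → n) (i : n) (hA : IsUnit (M.submatrix e e).det) :
    let x := Pi.single i 1 - (1 : Matrix n n R).submatrix id e *ᵥ
      ((M.submatrix e e)⁻¹ *ᵥ fun j => M (e j) i)
    x ⬝ᵥ (M *ᵥ x) =
      M i i - (fun j => M i (e j)) ⬝ᵥ ((M.submatrix e e)⁻¹ *ᵥ fun j => M (e j) i) := by
  intro x
  rw [dotProduct_mulVec_single_sub_one_submatrix_mulVec, mulVec_mulVec, mul_nonsing_inv _ hA,
    one_mulVec, sub_add_cancel]

end CommRing

theorem mul_self_apply_le_dotProduct_self [Fintype n] [Ring R] [LinearOrder R]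
    [IsOrderedRing R] (x : n → R) (i : n) : x i * x i ≤ x ⬝ᵥ x :=
  Finset.single_le_sum (f := fun k => x k * x k) (fun k _ => mul_self_nonneg (x k))
    (Finset.mem_univ i)

theorem PosSemidef.smul_dotProduct_self_le [Fintype n] [DecidableEq n] {M : Matrix n n ℝ}
    {c : ℝ} (hM : (M - c • 1).PosSemidef) (x : n → ℝ) : c * (x ⬝ᵥ x) ≤ x ⬝ᵥ (M *ᵥ x) := by
  have := hM.dotProduct_mulVec_nonneg x
  rwa [star_trivial, sub_mulVec, dotProduct_sub, smul_mulVec, one_mulVec, dotProduct_smul,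
    smul_eq_mul, sub_nonneg] at this

end Matrix

theorem conditional_variance_lower_bound_general (m : ℕ)
    (S2 : Matrix (Fin m) (Fin m) ℝ) (σ : ℝ)
    (hnoise : (S2 - σ ^ 2 • (1 : Matrix (Fin m) (Fin m) ℝ)).PosSemidef)
    (i : Fin m) (S : Finset (Fin m)) (hiS : i ∉ S)
    (hinv : IsUnit (S2.submatrix (fun a : {x // x ∈ S} => (a : Fin m))
        (fun a : {x // x ∈ S} => (a : Fin m))).det) :
    σ ^ 2 ≤ S2 i i -
      (fun j : {x // x ∈ S} => S2 i (j : Fin m)) ⬝ᵥ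
        ((S2.submatrix (fun a : {x // x ∈ S} => (a : Fin m))
            (fun a : {x // x ∈ S} => (a : Fin m)))⁻¹ *ᵥ
          fun j : {x // x ∈ S} => S2 (j : Fin m) i) := by
  set e : {x // x ∈ S} → Fin m := fun a => a
  set x : Fin m → ℝ := Pi.single i 1 - (1 : Matrix (Fin m) (Fin m) ℝ).submatrix id e *ᵥ
    ((S2.submatrix e e)⁻¹ *ᵥ fun j => S2 (e j) i)
  have hxi : x i = 1 := by
    have hi : i ∉ Set.range e := by simpa [e] using hiS
    simp only [x, Pi.sub_apply, Pi.single_eq_same,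
      one_submatrix_mulVec_apply_of_notMem_range _ _ hi, sub_zero]
  calc σ ^ 2 = σ ^ 2 * (x i * x i) := by rw [hxi, mul_one, mul_one]
    _ ≤ σ ^ 2 * (x ⬝ᵥ x) :=
      mul_le_mul_of_nonneg_left (mul_self_apply_le_dotProduct_self x i) (sq_nonneg σ)
    _ ≤ x ⬝ᵥ (S2 *ᵥ x) := hnoise.smul_dotProduct_self_le x
    _ = _ := dotProduct_mulVec_single_sub_one_submatrix_mulVec_inv S2 e i hinv

theorem conditional_variance_lower_bound (m : ℕ)
    (S2 : Matrix (Fin m) (Fin m) ℝ) (σ : ℝ) (hσ : 0 < σ)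
    (hS2 : S2.PosSemidef) (hnoise : (S2 - σ ^ 2 • (1 : Matrix (Fin m) (Fin m) ℝ)).PosSemidef)
    (i : Fin m) (S : Finset (Fin m)) (hiS : i ∉ S)
    (hinv : IsUnit (S2.submatrix (fun a : {x // x ∈ S} => (a : Fin m))
        (fun a : {x // x ∈ S} => (a : Fin m))).det) :
    σ ^ 2 ≤ S2 i i -
      (fun j : {x // x ∈ S} => S2 i (j : Fin m)) ⬝ᵥ
        ((S2.submatrix (fun a : {x // x ∈ S} => (a : Fin m))
            (fun a : {x // x ∈ S} => (a : Fin m)))⁻¹ *ᵥ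
          fun j : {x // x ∈ S} => S2 (j : Fin m) i) :=
  conditional_variance_lower_bound_general m S2 σ hnoise i S hiS hinv
end

section
/- Single-term variance bound: let 0 < σ² < c and let v be a real number with σ² ≤ v ≤ c. Then v − σ² ≤ (c − σ²)·log(σ⁻²·v) / log(c·σ⁻²). -/
/-! Concavity of `log`: on `[σ², c]` the graph of `log (v / σ²)` lies above its chord, which
joins `(σ², 0)` to `(c, log (c / σ²))`. -/

open Real

theorem ConcaveOn.sub_mul_sub_le_sub_mul_sub {𝕜 : Type*} [Field 𝕜] [LinearOrder 𝕜]
    [IsStrictOrderedRing 𝕜] {s : Set 𝕜} {f : 𝕜 → 𝕜} (hf : ConcaveOn 𝕜 s f) {a b x : 𝕜}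
    (ha : a ∈ s) (hb : b ∈ s) (hax : a ≤ x) (hxb : x ≤ b) :
    (x - a) * (f b - f a) ≤ (b - a) * (f x - f a) := by
  rcases hax.eq_or_lt with rfl | hax
  · simp
  rcases hxb.eq_or_lt with rfl | hxb
  · rfl
  have hchord := hf.neg.secant_mono_aux1 ha hb hax hxb
  simp only [Pi.neg_apply] at hchord
  linear_combination hchord

theorem Real.sub_mul_log_div_le_sub_mul_log_div {a b x : ℝ} (ha : 0 < a) (hax : a ≤ x)
    (hxb : x ≤ b) : (x - a) * log (b / a) ≤ (b - a) * log (x / a) := by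
  have hb : 0 < b := ha.trans_le (hax.trans hxb)
  rw [log_div hb.ne' ha.ne', log_div (ha.trans_le hax).ne' ha.ne']
  exact strictConcaveOn_log_Ioi.concaveOn.sub_mul_sub_le_sub_mul_sub ha hb hax hxb

theorem single_term_variance_bound (σ c v : ℝ) (hσ : 0 < σ) (hc : σ ^ 2 < c)
    (hv1 : σ ^ 2 ≤ v) (hv2 : v ≤ c) :
    v - σ ^ 2 ≤ (c - σ ^ 2) * Real.log ((σ ^ 2)⁻¹ * v) / Real.log (c * (σ ^ 2)⁻¹) := by
  have hσ2 : 0 < σ ^ 2 := by positivity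
  have hlog : 0 < log (c / σ ^ 2) := log_pos ((one_lt_div hσ2).2 hc)
  rw [inv_mul_eq_div, ← div_eq_mul_inv, le_div_iff₀ hlog]
  exact sub_mul_log_div_le_sub_mul_log_div hσ2 hv1 hv2
end
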